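/- Let S be a bounded linear operator on a complex Hilbert space and 0 < q < 1, 0 ≤ α ≤ 1. Then w_q(S)² ≤ q²‖α|S|² + (1-α)|S*|²‖ + (1-q²)(α‖|S|²‖ + (1-α)‖|S*|²‖) + 2q√(1-q²)‖|S*|^{2(1-α)}‖‖|S|^{2α}‖. -/

import Mathlib

/-!
For unit vectors with `⟪x, y⟫ = q`, write `y = q x + w` with `w ⊥ x` and `‖w‖ = √(1 - q²)`, so
`|⟪Sx, y⟫| ≤ q |⟪Sx, x⟫| + √(1 - q²) ‖Sx‖`. Square this and bound the three resulting terms: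
`|⟪Sx, x⟫|²` is at most both `‖Sx‖²` and `‖S* x‖²`, hence at most their convex combination
`⟪(α|S|² + (1-α)|S*|²) x, x⟫`; `‖Sx‖² ≤ ‖S‖² = ‖|S|²‖ = ‖|S*|²‖`; and
`|⟪Sx, x⟫| ‖Sx‖ ≤ ‖S‖² = ‖S*‖^{2(1-α)} ‖S‖^{2α} ≤ ‖|S*|^{2(1-α)}‖ ‖|S|^{2α}‖`.
-/

noncomputable def qNumRadius {H : Type*} [NormedAddCommGroup H] [InnerProductSpace ℂ H]
    (q : ℂ) (T : H →L[ℂ] H) : ℝ :=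
  sSup {r : ℝ | ∃ x y : H, ‖x‖ = 1 ∧ ‖y‖ = 1 ∧ (inner ℂ x y : ℂ) = q ∧
    r = ‖(inner ℂ (T x) y : ℂ)‖}

/-- `|S|^t = (S*S)^(t/2)`, the real power of the absolute value of `S`, realized via the
continuous functional calculus applied to the positive operator `S*S`. -/
noncomputable def absRpow {H : Type*} [NormedAddCommGroup H] [InnerProductSpace ℂ H]
    [CompleteSpace H] (S : H →L[ℂ] H) (t : ℝ) : H →L[ℂ] H :=
  cfc (fun x : ℝ => |x| ^ (t / 2)) (ContinuousLinearMap.adjoint S * S)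

open ContinuousLinearMap

section InnerProductSpace

variable {E : Type*} [NormedAddCommGroup E] [InnerProductSpace ℂ E]

lemma norm_inner_le_of_inner_eq_ofReal {x y : E} {q : ℝ} (hq : 0 ≤ q) (hx : ‖x‖ = 1)
    (hy : ‖y‖ = 1) (hxy : inner ℂ x y = (q : ℂ)) (v : E) :
    ‖inner ℂ v y‖ ≤ q * ‖inner ℂ v x‖ + √(1 - q ^ 2) * ‖v‖ := by
  set w := y - (q : ℂ) • x
  have hxw : inner ℂ ((q : ℂ) • x) w = 0 := by
    rw [inner_smul_left, inner_sub_right, inner_smul_right, hxy, inner_self_eq_norm_sq_to_K, hx]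
    simp
  have hw : ‖w‖ = √(1 - q ^ 2) := by
    have h := norm_add_sq_eq_norm_sq_add_norm_sq_of_inner_eq_zero _ _ hxw
    rw [add_sub_cancel, hy, norm_smul, Complex.norm_real, Real.norm_of_nonneg hq, hx] at h
    rw [← Real.sqrt_sq (norm_nonneg w)]
    congr 1
    linarith
  calc ‖inner ℂ v y‖ = ‖(q : ℂ) * inner ℂ v x + inner ℂ v w‖ := by
        rw [← inner_smul_right, ← inner_add_right, add_sub_cancel]
    _ ≤ q * ‖inner ℂ v x‖ + ‖w‖ * ‖v‖ := by
        grw [norm_add_le, norm_mul, norm_inner_le_norm v w, Complex.norm_real,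
          Real.norm_of_nonneg hq, mul_comm ‖v‖]
    _ = q * ‖inner ℂ v x‖ + √(1 - q ^ 2) * ‖v‖ := by rw [hw]

lemma norm_inner_le_of_norm_eq_one {x : E} (hx : ‖x‖ = 1) (v : E) : ‖inner ℂ v x‖ ≤ ‖v‖ := by
  simpa [hx] using norm_inner_le_norm (𝕜 := ℂ) v x

lemma sq_le_one_of_inner_eq_ofReal {x y : E} {q : ℝ} (hx : ‖x‖ = 1) (hy : ‖y‖ = 1)
    (hxy : inner ℂ x y = (q : ℂ)) : q ^ 2 ≤ 1 := by
  simpa [hx, hy, hxy, sq_abs] using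
    pow_le_pow_left₀ (norm_nonneg _) (norm_inner_le_norm (𝕜 := ℂ) x y) 2

lemma sq_norm_inner_le_of_inner_eq_ofReal {x y : E} {q : ℝ} (hq : 0 ≤ q) (hx : ‖x‖ = 1)
    (hy : ‖y‖ = 1) (hxy : inner ℂ x y = (q : ℂ)) (v : E) :
    ‖inner ℂ v y‖ ^ 2 ≤ q ^ 2 * ‖inner ℂ v x‖ ^ 2 + (1 - q ^ 2) * ‖v‖ ^ 2
      + 2 * q * √(1 - q ^ 2) * (‖inner ℂ v x‖ * ‖v‖) := by
  have hq1 := sq_le_one_of_inner_eq_ofReal hx hy hxy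
  calc ‖inner ℂ v y‖ ^ 2 ≤ (q * ‖inner ℂ v x‖ + √(1 - q ^ 2) * ‖v‖) ^ 2 := by
        gcongr; exact norm_inner_le_of_inner_eq_ofReal hq hx hy hxy v
    _ = _ := by rw [add_sq, mul_pow, mul_pow, Real.sq_sqrt (by linarith)]; ring

lemma qNumRadius_sq_le {q : ℂ} {T : E →L[ℂ] E} {B : ℝ} (hB : 0 ≤ B)
    (h : ∀ x y : E, ‖x‖ = 1 → ‖y‖ = 1 → inner ℂ x y = q → ‖inner ℂ (T x) y‖ ^ 2 ≤ B) :
    qNumRadius q T ^ 2 ≤ B := by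
  have hnonneg : 0 ≤ qNumRadius q T :=
    Real.sSup_nonneg (by rintro _ ⟨x, y, -, -, -, rfl⟩; exact norm_nonneg _)
  have hle : qNumRadius q T ≤ √B := by
    refine Real.sSup_le ?_ (Real.sqrt_nonneg B)
    rintro _ ⟨x, y, hx, hy, hxy, rfl⟩
    exact (Real.le_sqrt (norm_nonneg _) hB).mpr (h x y hx hy hxy)
  exact (Real.le_sqrt hnonneg hB).mp hle

end InnerProductSpace

open scoped InnerProduct

section absRpow

variable {H : Type*} [NormedAddCommGroup H] [InnerProductSpace ℂ H] [CompleteSpace H]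

lemma adjoint_mul_self_nonneg (S : H →L[ℂ] H) : 0 ≤ S† * S :=
  star_mul_self_nonneg S

lemma absRpow_two (S : H →L[ℂ] H) : absRpow S 2 = S† * S := by
  have h : ∀ x ∈ spectrum ℝ (S† * S), |x| ^ ((2 : ℝ) / 2) = x := fun x hx => by
    rw [abs_of_nonneg (spectrum_nonneg_of_nonneg (adjoint_mul_self_nonneg S) hx)]; norm_num
  rw [absRpow, cfc_congr h, cfc_id' ℝ (S† * S) (.of_nonneg (adjoint_mul_self_nonneg S))]

lemma norm_absRpow_two (S : H →L[ℂ] H) : ‖absRpow S 2‖ = ‖S‖ ^ 2 := by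
  rw [absRpow_two, ← star_eq_adjoint, CStarRing.norm_star_mul_self, sq]

/-- `‖S‖ ^ t` is the value of `x ↦ |x| ^ (t / 2)` at the point `‖S† S‖` of the spectrum. -/
lemma rpow_norm_le_norm_absRpow {S : H →L[ℂ] H} (hS : S ≠ 0) {t : ℝ} (ht : 0 ≤ t) :
    ‖S‖ ^ t ≤ ‖absRpow S t‖ := by
  have : Nontrivial (H →L[ℂ] H) := nontrivial_of_ne S 0 hS
  have hpos := adjoint_mul_self_nonneg S
  have hnorm : ‖S† * S‖ = ‖S‖ ^ (2 : ℝ) := by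
    rw [← star_eq_adjoint, CStarRing.norm_star_mul_self, Real.rpow_two, sq]
  have hcont : ContinuousOn (fun x : ℝ => |x| ^ (t / 2)) (spectrum ℝ (S† * S)) :=
    (continuous_abs.rpow_const fun _ => Or.inr (by positivity)).continuousOn
  calc ‖S‖ ^ t = ‖|‖S† * S‖| ^ (t / 2)‖ := by
        rw [abs_norm, Real.norm_of_nonneg (by positivity), hnorm, ← Real.rpow_mul (norm_nonneg S)]
        ring_nf
    _ ≤ ‖absRpow S t‖ :=
        norm_apply_le_norm_cfc _ _ (CStarAlgebra.norm_mem_spectrum_of_nonneg hpos) hcont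
          (.of_nonneg hpos)

lemma sq_norm_le_norm_absRpow_adjoint_mul (S : H →L[ℂ] H) {s t : ℝ} (hs : 0 ≤ s) (ht : 0 ≤ t)
    (hst : s + t = 2) : ‖S‖ ^ 2 ≤ ‖absRpow (S†) s‖ * ‖absRpow S t‖ := by
  rcases eq_or_ne S 0 with rfl | hS
  · rw [norm_zero, zero_pow two_ne_zero]
    positivity
  have hS' : S† ≠ 0 := by simpa using hS
  calc ‖S‖ ^ 2 = ‖S†‖ ^ s * ‖S‖ ^ t := by
        rw [adjoint.norm_map, ← Real.rpow_add (norm_pos_iff.mpr hS), hst, Real.rpow_two]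
    _ ≤ ‖absRpow (S†) s‖ * ‖absRpow S t‖ := by
        gcongr
        exacts [rpow_norm_le_norm_absRpow hS' hs, rpow_norm_le_norm_absRpow hS ht]

lemma sq_norm_inner_apply_self_le (S : H →L[ℂ] H) {x : H} (hx : ‖x‖ = 1) {α : ℝ} (hα0 : 0 ≤ α)
    (hα1 : α ≤ 1) : ‖inner ℂ (S x) x‖ ^ 2 ≤ ‖α • absRpow S 2 + (1 - α) • absRpow (S†) 2‖ := by
  set T := α • absRpow S 2 + (1 - α) • absRpow (S†) 2
  have hSx := norm_inner_le_of_norm_eq_one hx (S x)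
  have hSadjx : ‖inner ℂ (S x) x‖ ≤ ‖(S†) x‖ := by
    rw [← norm_inner_symm, ← adjoint_inner_left]
    exact norm_inner_le_of_norm_eq_one hx _
  have hT : RCLike.re (inner ℂ (T x) x) = α * ‖S x‖ ^ 2 + (1 - α) * ‖(S†) x‖ ^ 2 := by
    rw [apply_norm_sq_eq_inner_adjoint_left, apply_norm_sq_eq_inner_adjoint_left, adjoint_adjoint]
    simp [T, absRpow_two]
  calc ‖inner ℂ (S x) x‖ ^ 2 ≤ α * ‖S x‖ ^ 2 + (1 - α) * ‖(S†) x‖ ^ 2 := by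
        have h1 := pow_le_pow_left₀ (norm_nonneg _) hSx 2
        have h2 := pow_le_pow_left₀ (norm_nonneg _) hSadjx 2
        nlinarith
    _ = RCLike.re (inner ℂ (T x) x) := hT.symm
    _ ≤ ‖T x‖ := by simpa [hx] using re_inner_le_norm (𝕜 := ℂ) (T x) x
    _ ≤ ‖T‖ := unit_le_opNorm T x hx.le

lemma sq_norm_inner_apply_le (S : H →L[ℂ] H) {q : ℝ} (hq : 0 ≤ q) {α : ℝ} (hα0 : 0 ≤ α)
    (hα1 : α ≤ 1) {x y : H} (hx : ‖x‖ = 1) (hy : ‖y‖ = 1) (hxy : inner ℂ x y = (q : ℂ)) :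
    ‖inner ℂ (S x) y‖ ^ 2
      ≤ q ^ 2 * ‖α • absRpow S 2 + (1 - α) • absRpow (S†) 2‖
        + (1 - q ^ 2) * (α * ‖absRpow S 2‖ + (1 - α) * ‖absRpow (S†) 2‖)
        + 2 * q * √(1 - q ^ 2) * (‖absRpow (S†) (2 * (1 - α))‖ * ‖absRpow S (2 * α)‖) := by
  have hq1 := sq_le_one_of_inner_eq_ofReal hx hy hxy
  have hSx : ‖S x‖ ≤ ‖S‖ := unit_le_opNorm S x hx.le
  have hinner := norm_inner_le_of_norm_eq_one hx (S x)
  have hsq : ‖S x‖ ^ 2 ≤ α * ‖absRpow S 2‖ + (1 - α) * ‖absRpow (S†) 2‖ := by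
    rw [norm_absRpow_two, norm_absRpow_two, adjoint.norm_map]
    nlinarith [pow_le_pow_left₀ (norm_nonneg _) hSx 2]
  have hmul : ‖inner ℂ (S x) x‖ * ‖S x‖ ≤ ‖S‖ ^ 2 := by
    rw [sq]; gcongr; exact hinner.trans hSx
  calc ‖inner ℂ (S x) y‖ ^ 2
      ≤ q ^ 2 * ‖inner ℂ (S x) x‖ ^ 2 + (1 - q ^ 2) * ‖S x‖ ^ 2
        + 2 * q * √(1 - q ^ 2) * (‖inner ℂ (S x) x‖ * ‖S x‖) :=
        sq_norm_inner_le_of_inner_eq_ofReal hq hx hy hxy (S x)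
    _ ≤ _ := by
        gcongr q ^ 2 * ?_ + (1 - q ^ 2) * ?_ + _ * ?_
        · exact sq_norm_inner_apply_self_le S hx hα0 hα1
        · exact hmul.trans (sq_norm_le_norm_absRpow_adjoint_mul S (by linarith) (by linarith)
            (by ring))

end absRpow

theorem stmt9 {H : Type*} [NormedAddCommGroup H] [InnerProductSpace ℂ H] [CompleteSpace H]
    (S : H →L[ℂ] H) (q : ℝ) (hq0 : 0 < q) (hq1 : q < 1)
    (α : ℝ) (hα0 : 0 ≤ α) (hα1 : α ≤ 1) :
    qNumRadius (q : ℂ) S ^ 2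
      ≤ q ^ 2 * ‖α • absRpow S 2 + (1 - α) • absRpow (ContinuousLinearMap.adjoint S) 2‖
        + (1 - q ^ 2) * (α * ‖absRpow S 2‖
            + (1 - α) * ‖absRpow (ContinuousLinearMap.adjoint S) 2‖)
        + 2 * q * Real.sqrt (1 - q ^ 2) *
            (‖absRpow (ContinuousLinearMap.adjoint S) (2 * (1 - α))‖ *
              ‖absRpow S (2 * α)‖) := by
  refine qNumRadius_sq_le ?_ fun x y hx hy hxy ↦ sq_norm_inner_apply_le S hq0.le hα0 hα1 hx hy hxy
  have hq : 0 ≤ 1 - q ^ 2 := by nlinarith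
  positivity
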